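/- Let H, A, B be finite-dimensional complex inner product spaces, V : A ⊗[ℂ] B → H a linear isometry, P = V ∘ V†, and E : H → H a linear operator. If for every linear map L : A → A the operator P ∘ E ∘ P commutes with L̄ = V ∘ (L ⊗ id_B) ∘ V†, then there exists a linear map g : B → B such that P ∘ E ∘ P = V ∘ (id_A ⊗ g) ∘ V†. -/

import Mathlib

/-!
Since `V† ∘ V = id`, conjugating by `V` turns the hypothesis into the statement that
`F = V† E V` commutes with every `L ⊗ id_B` on `A ⊗ B`. Taking for `L` the rank-one maps
`x ↦ φ x • a` with `φ a₀ = 1` gives `F (a ⊗ b) = a ⊗ g b`, where `g b` is the `B`-component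
of `F (a₀ ⊗ b)` along `φ`; hence `F = id_A ⊗ g` and `P E P = V F V† = V (id_A ⊗ g) V†`.
-/

open TensorProduct

namespace LinearMap

section Compression

variable {R M H : Type*} [Semiring R] [AddCommMonoid M] [Module R M]
  [AddCommMonoid H] [Module R H] {V : M →ₗ[R] H} {Vd : H →ₗ[R] M}

theorem conj_comp_conj (hVdV : Vd ∘ₗ V = id) (X Y : Module.End R M) :
    (V ∘ₗ X ∘ₗ Vd) ∘ₗ (V ∘ₗ Y ∘ₗ Vd) = V ∘ₗ (X ∘ₗ Y) ∘ₗ Vd :=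
  calc (V ∘ₗ X ∘ₗ Vd) ∘ₗ (V ∘ₗ Y ∘ₗ Vd) = V ∘ₗ X ∘ₗ (Vd ∘ₗ V) ∘ₗ Y ∘ₗ Vd := rfl
    _ = V ∘ₗ (X ∘ₗ Y) ∘ₗ Vd := by rw [hVdV, id_comp]; rfl

theorem eq_of_conj_eq (hVdV : Vd ∘ₗ V = id) {X Y : Module.End R M}
    (hXY : V ∘ₗ X ∘ₗ Vd = V ∘ₗ Y ∘ₗ Vd) : X = Y :=
  calc X = (Vd ∘ₗ V) ∘ₗ X ∘ₗ (Vd ∘ₗ V) := by rw [hVdV, id_comp, comp_id]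
    _ = Vd ∘ₗ (V ∘ₗ X ∘ₗ Vd) ∘ₗ V := rfl
    _ = Vd ∘ₗ (V ∘ₗ Y ∘ₗ Vd) ∘ₗ V := by rw [hXY]
    _ = (Vd ∘ₗ V) ∘ₗ Y ∘ₗ (Vd ∘ₗ V) := rfl
    _ = Y := by rw [hVdV, id_comp, comp_id]

end Compression

theorem rTensor_smulRight {R A B : Type*} [CommSemiring R] [AddCommMonoid A] [Module R A]
    [AddCommMonoid B] [Module R B] (φ : Module.Dual R A) (a : A) :
    (φ.smulRight a).rTensor B
      = TensorProduct.mk R A B a ∘ₗ (TensorProduct.lid R B).toLinearMap ∘ₗ φ.rTensor B := by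
  ext x y
  simp [smul_tmul]

section Commutant

variable {K A B : Type*} [Field K] [AddCommGroup A] [Module K A] [AddCommGroup B] [Module K B]

theorem exists_eq_lTensor_of_forall_comp_rTensor_comm (F : Module.End K (A ⊗[K] B))
    (hF : ∀ L : Module.End K A, F ∘ₗ L.rTensor B = L.rTensor B ∘ₗ F) :
    ∃ g : Module.End K B, F = g.lTensor A := by
  rcases subsingleton_or_nontrivial A with _ | _
  · exact ⟨0, Subsingleton.elim _ _⟩
  obtain ⟨a₀, ha₀⟩ := exists_ne (0 : A)
  obtain ⟨φ, hφ⟩ := Module.Projective.exists_dual_eq_one K ha₀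
  refine ⟨(TensorProduct.lid K B).toLinearMap ∘ₗ φ.rTensor B ∘ₗ F ∘ₗ TensorProduct.mk K A B a₀,
    TensorProduct.ext' fun a b => ?_⟩
  have hLa₀ : (φ.smulRight a).rTensor B (a₀ ⊗ₜ b) = a ⊗ₜ b := by simp [hφ]
  calc F (a ⊗ₜ b) = (F ∘ₗ (φ.smulRight a).rTensor B) (a₀ ⊗ₜ b) := by rw [comp_apply, hLa₀]
    _ = ((φ.smulRight a).rTensor B ∘ₗ F) (a₀ ⊗ₜ b) := by rw [hF]
    _ = _ := by rw [rTensor_smulRight]; rfl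

end Commutant

end LinearMap

open LinearMap in
theorem subsystem_code_commutant_implies_gauge_action_general
    {H A B : Type*}
    [NormedAddCommGroup H] [InnerProductSpace ℂ H]
    [NormedAddCommGroup A] [InnerProductSpace ℂ A]
    [NormedAddCommGroup B] [InnerProductSpace ℂ B]
    (V : A ⊗[ℂ] B →ₗ[ℂ] H)
    (Vd : H →ₗ[ℂ] A ⊗[ℂ] B)
    (hVdV : Vd ∘ₗ V = LinearMap.id)
    (E : H →ₗ[ℂ] H)
    (hcomm : ∀ L : A →ₗ[ℂ] A,
      ((V ∘ₗ Vd) ∘ₗ E ∘ₗ (V ∘ₗ Vd)) ∘ₗ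
          (V ∘ₗ TensorProduct.map L LinearMap.id ∘ₗ Vd)
        = (V ∘ₗ TensorProduct.map L LinearMap.id ∘ₗ Vd) ∘ₗ
            ((V ∘ₗ Vd) ∘ₗ E ∘ₗ (V ∘ₗ Vd))) :
    ∃ g : B →ₗ[ℂ] B,
      (V ∘ₗ Vd) ∘ₗ E ∘ₗ (V ∘ₗ Vd)
        = V ∘ₗ TensorProduct.map LinearMap.id g ∘ₗ Vd := by
  set F := Vd ∘ₗ E ∘ₗ V
  have hPEP : (V ∘ₗ Vd) ∘ₗ E ∘ₗ (V ∘ₗ Vd) = V ∘ₗ F ∘ₗ Vd := rfl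
  have hF (L : Module.End ℂ A) : F ∘ₗ L.rTensor B = L.rTensor B ∘ₗ F := by
    apply eq_of_conj_eq hVdV
    rw [← conj_comp_conj hVdV, ← conj_comp_conj hVdV, ← hPEP]
    exact hcomm L
  obtain ⟨g, hg⟩ := exists_eq_lTensor_of_forall_comp_rTensor_comm F hF
  exact ⟨g, by rw [hPEP, hg]; rfl⟩

/-- If `P ∘ E ∘ P` commutes with every logical operator
`L̄ = V ∘ (L ⊗ id_B) ∘ V†` of a subsystem code, then
`P ∘ E ∘ P = V ∘ (id_A ⊗ g) ∘ V†` for some linear `g : B → B`.  Here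
`V : A ⊗[ℂ] B → H` is a linear isometry (inner-product preserving on pure
tensors, hence everywhere by sesquilinearity), and `Vd = V†` is its adjoint,
characterized by `Vd ∘ V = id` and self-adjointness of `P = V ∘ Vd`. -/
theorem subsystem_code_commutant_implies_gauge_action
    {H A B : Type*}
    [NormedAddCommGroup H] [InnerProductSpace ℂ H] [FiniteDimensional ℂ H]
    [NormedAddCommGroup A] [InnerProductSpace ℂ A] [FiniteDimensional ℂ A]
    [NormedAddCommGroup B] [InnerProductSpace ℂ B] [FiniteDimensional ℂ B]
    (V : A ⊗[ℂ] B →ₗ[ℂ] H)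
    (hV : ∀ (a₁ a₂ : A) (b₁ b₂ : B),
      (inner ℂ (V (a₁ ⊗ₜ[ℂ] b₁)) (V (a₂ ⊗ₜ[ℂ] b₂)) : ℂ)
        = (inner ℂ a₁ a₂ : ℂ) * (inner ℂ b₁ b₂ : ℂ))
    (Vd : H →ₗ[ℂ] A ⊗[ℂ] B)
    (hVdV : Vd ∘ₗ V = LinearMap.id)
    (hsa : (V ∘ₗ Vd).IsSymmetric)
    (E : H →ₗ[ℂ] H)
    (hcomm : ∀ L : A →ₗ[ℂ] A,
      ((V ∘ₗ Vd) ∘ₗ E ∘ₗ (V ∘ₗ Vd)) ∘ₗ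
          (V ∘ₗ TensorProduct.map L LinearMap.id ∘ₗ Vd)
        = (V ∘ₗ TensorProduct.map L LinearMap.id ∘ₗ Vd) ∘ₗ
            ((V ∘ₗ Vd) ∘ₗ E ∘ₗ (V ∘ₗ Vd))) :
    ∃ g : B →ₗ[ℂ] B,
      (V ∘ₗ Vd) ∘ₗ E ∘ₗ (V ∘ₗ Vd)
        = V ∘ₗ TensorProduct.map LinearMap.id g ∘ₗ Vd :=
  subsystem_code_commutant_implies_gauge_action_general V Vd hVdV E hcomm
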